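/- arXiv:2311.16045 — 2 statements merged into one kernel-verified Lean document; each statement's English description precedes it below -/
import Mathlib

section
/- Along any solution of the quantized Hazeltine system Ẇ = [W,M₁]+[Θ,M₂], Θ̇ = [Θ,M₁] − α[Θ,χ], χ̇ = [χ,M₁]+[Θ,M₂], the quantity tr((W − χ)ᵏ) is constant in time for every natural number k. -/
open Matrix

/-!
The `[Θ, M₂]` terms cancel in `d/dt (W − χ)`, so `D = W − χ` follows the Lax equation
`Ḋ = [D, M₁]`. By the product rule every power then follows `d/dt Dᵏ = [Dᵏ, M₁]`, and a
commutator is traceless, so `tr Dᵏ` has zero derivative.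
-/

namespace Matrix

section Calculus

variable {𝕜 R : Type*} [NontriviallyNormedField 𝕜] [NormedRing R] [NormedAlgebra 𝕜 R]
  {l m n : Type*} [Fintype m] {x : 𝕜}

theorem hasDerivAt_mul_apply {A : 𝕜 → Matrix l m R} {B : 𝕜 → Matrix m n R}
    {A' : Matrix l m R} {B' : Matrix m n R}
    (hA : ∀ i j, HasDerivAt (fun s => A s i j) (A' i j) x)
    (hB : ∀ i j, HasDerivAt (fun s => B s i j) (B' i j) x) (i : l) (k : n) :
    HasDerivAt (fun s => (A s * B s) i k) ((A' * B x + A x * B') i k) x := by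
  simp only [mul_apply, add_apply, ← Finset.sum_add_distrib]
  exact HasDerivAt.fun_sum fun j _ => (hA i j).mul (hB j k)

theorem hasDerivAt_trace [Fintype n] {A : 𝕜 → Matrix n n R} {A' : Matrix n n R}
    (hA : ∀ i j, HasDerivAt (fun s => A s i j) (A' i j) x) :
    HasDerivAt (fun s => (A s).trace) A'.trace x :=
  HasDerivAt.fun_sum fun i _ => hA i i

theorem hasDerivAt_pow_apply_of_commutator [Fintype n] [DecidableEq n] {D : 𝕜 → Matrix n n R}
    {M : Matrix n n R} (hD : ∀ i j, HasDerivAt (fun s => D s i j) ((D x * M - M * D x) i j) x)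
    (k : ℕ) (i j : n) :
    HasDerivAt (fun s => (D s ^ k) i j) ((D x ^ k * M - M * D x ^ k) i j) x := by
  induction k generalizing i j with
  | zero => simpa using hasDerivAt_const x ((1 : Matrix n n R) i j)
  | succ k ih =>
    have hleibniz : D x ^ (k + 1) * M - M * D x ^ (k + 1) =
        (D x ^ k * M - M * D x ^ k) * D x + D x ^ k * (D x * M - M * D x) := by
      rw [pow_succ]; noncomm_ring
    rw [hleibniz]
    simp only [pow_succ]
    exact hasDerivAt_mul_apply ih hD i j

end Calculus

theorem trace_pow_eq_of_hasDerivAt_commutator {𝕜 R n : Type*} [RCLike 𝕜] [NormedCommRing R]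
    [NormedAlgebra 𝕜 R] [Fintype n] [DecidableEq n] {D M : 𝕜 → Matrix n n R}
    (hD : ∀ t i j, HasDerivAt (fun s => D s i j) ((D t * M t - M t * D t) i j) t)
    (k : ℕ) (s t : 𝕜) : (D s ^ k).trace = (D t ^ k).trace := by
  have hderiv (t : 𝕜) : HasDerivAt (fun s => (D s ^ k).trace) 0 t := by
    simpa [trace_sub, trace_mul_comm (D t ^ k)] using
      hasDerivAt_trace (hasDerivAt_pow_apply_of_commutator (hD t) k)
  exact is_const_of_deriv_eq_zero (fun t => (hderiv t).differentiableAt)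
    (fun t => (hderiv t).deriv) s t

end Matrix

theorem stmt17_general (N : ℕ) (W Θ χ M₁ M₂ : ℝ → Matrix (Fin N) (Fin N) ℂ)
    (hW : ∀ t i j, HasDerivAt (fun s => W s i j)
      (((W t * M₁ t - M₁ t * W t) + (Θ t * M₂ t - M₂ t * Θ t)) i j) t)
    (hχ : ∀ t i j, HasDerivAt (fun s => χ s i j)
      (((χ t * M₁ t - M₁ t * χ t) + (Θ t * M₂ t - M₂ t * Θ t)) i j) t) :
    ∀ (k : ℕ) (s t : ℝ), ((W s - χ s) ^ k).trace = ((W t - χ t) ^ k).trace := by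
  refine trace_pow_eq_of_hasDerivAt_commutator (D := fun s => W s - χ s) (M := M₁) fun t i j => ?_
  have hlax : (W t - χ t) * M₁ t - M₁ t * (W t - χ t) =
      (W t * M₁ t - M₁ t * W t + (Θ t * M₂ t - M₂ t * Θ t)) -
        (χ t * M₁ t - M₁ t * χ t + (Θ t * M₂ t - M₂ t * Θ t)) := by
    noncomm_ring
  rw [hlax, Matrix.sub_apply]
  exact (hW t i j).fun_sub (hχ t i j)

/-- along any solution of the quantized Hazeltine system
`Ẇ = [W,M₁]+[Θ,M₂]`, `Θ̇ = [Θ,M₁] − α[Θ,χ]`, `χ̇ = [χ,M₁]+[Θ,M₂]`, the quantity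
`tr((W − χ)ᵏ)` is constant in time for every natural number `k`. -/
theorem stmt17 (N : ℕ) (W Θ χ M₁ M₂ : ℝ → Matrix (Fin N) (Fin N) ℂ) (α : ℝ)
    (hW : ∀ t i j, HasDerivAt (fun s => W s i j)
      (((W t * M₁ t - M₁ t * W t) + (Θ t * M₂ t - M₂ t * Θ t)) i j) t)
    (hΘ : ∀ t i j, HasDerivAt (fun s => Θ s i j)
      (((Θ t * M₁ t - M₁ t * Θ t) - α • (Θ t * χ t - χ t * Θ t)) i j) t)
    (hχ : ∀ t i j, HasDerivAt (fun s => χ s i j)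
      (((χ t * M₁ t - M₁ t * χ t) + (Θ t * M₂ t - M₂ t * Θ t)) i j) t) :
    ∀ (k : ℕ) (s t : ℝ), ((W s - χ s) ^ k).trace = ((W t - χ t) ^ k).trace :=
  stmt17_general N W Θ χ M₁ M₂ hW hχ
end

section
/- Along any solution of the quantized Hazeltine system (as above), the cross-helicity tr(χ·Θᵏ) is constant in time for every natural number k. -/
/-!
With `M = M₁ - α • χ`, the system reads `Θ̇ = ⁅Θ, M⁆` and `χ̇ = ⁅χ, M⁆ + ⁅Θ, M₂⁆`. The Lax equation
for `Θ` propagates to `(Θᵏ)˙ = ⁅Θᵏ, M⁆`, so the derivative of `tr (χ Θᵏ)` is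
`tr ⁅χ Θᵏ, M⁆ + tr ⁅Θ, M₂ Θᵏ⁆`, a sum of traces of commutators, which vanishes.
-/

open Matrix

section MatrixCurve

variable {𝕜 R n : Type*} [NontriviallyNormedField 𝕜] [Fintype n]

def HasMatrixDerivAt [NormedAddCommGroup R] [NormedSpace 𝕜 R]
    (A : 𝕜 → Matrix n n R) (A' : Matrix n n R) (t : 𝕜) : Prop :=
  ∀ i j, HasDerivAt (fun s => A s i j) (A' i j) t

namespace HasMatrixDerivAt

variable {A B : 𝕜 → Matrix n n R} {A' B' : Matrix n n R} {t : 𝕜}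

theorem trace [NormedAddCommGroup R] [NormedSpace 𝕜 R] (hA : HasMatrixDerivAt A A' t) :
    HasDerivAt (fun s => (A s).trace) A'.trace t :=
  HasDerivAt.fun_sum fun i _ => hA i i

theorem mul [NormedRing R] [NormedAlgebra 𝕜 R] (hA : HasMatrixDerivAt A A' t)
    (hB : HasMatrixDerivAt B B' t) :
    HasMatrixDerivAt (fun s => A s * B s) (A' * B t + A t * B') t := by
  intro i j
  simpa only [mul_apply, Matrix.add_apply, Finset.sum_add_distrib] using
    HasDerivAt.fun_sum fun l _ => (hA i l).fun_mul (hB l j)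

theorem pow_of_eq_lie [NormedRing R] [NormedAlgebra 𝕜 R] [DecidableEq n] {M : Matrix n n R}
    (hA : HasMatrixDerivAt A ⁅A t, M⁆ t) (k : ℕ) :
    HasMatrixDerivAt (fun s => A s ^ k) ⁅A t ^ k, M⁆ t := by
  induction k with
  | zero =>
    intro i j
    simpa [Ring.lie_def] using hasDerivAt_const t ((1 : Matrix n n R) i j)
  | succ k ih =>
    have h : ⁅A t, M⁆ * A t ^ k + A t * ⁅A t ^ k, M⁆ = ⁅A t ^ (k + 1), M⁆ := by
      simp only [Ring.lie_def, pow_succ']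
      noncomm_ring
    simpa only [pow_succ', h] using hA.mul ih

end HasMatrixDerivAt

end MatrixCurve

theorem hasDerivAt_trace_mul_pow_eq_zero {𝕜 R n : Type*} [NontriviallyNormedField 𝕜]
    [NormedCommRing R] [NormedAlgebra 𝕜 R] [Fintype n] [DecidableEq n]
    {Θ χ : 𝕜 → Matrix n n R} {M P : Matrix n n R} {t : 𝕜}
    (hΘ : HasMatrixDerivAt Θ ⁅Θ t, M⁆ t) (hχ : HasMatrixDerivAt χ (⁅χ t, M⁆ + ⁅Θ t, P⁆) t)
    (k : ℕ) : HasDerivAt (fun s => (χ s * Θ s ^ k).trace) 0 t := by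
  have h := (hχ.mul (hΘ.pow_of_eq_lie k)).trace
  have hzero : ((⁅χ t, M⁆ + ⁅Θ t, P⁆) * Θ t ^ k + χ t * ⁅Θ t ^ k, M⁆).trace = 0 :=
    calc _ = (⁅χ t * Θ t ^ k, M⁆ + ⁅Θ t, P * Θ t ^ k⁆).trace := by
            congr 1
            simp only [Ring.lie_def, add_mul, sub_mul, mul_sub, mul_assoc, ← pow_succ, ← pow_succ']
            abel
      _ = 0 := by simp
  rwa [hzero] at h

theorem stmt18_general (N : ℕ) (Θ χ M₁ M₂ : ℝ → Matrix (Fin N) (Fin N) ℂ) (α : ℝ)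
    (hΘ : ∀ t i j, HasDerivAt (fun s => Θ s i j)
      (((Θ t * M₁ t - M₁ t * Θ t) - α • (Θ t * χ t - χ t * Θ t)) i j) t)
    (hχ : ∀ t i j, HasDerivAt (fun s => χ s i j)
      (((χ t * M₁ t - M₁ t * χ t) + (Θ t * M₂ t - M₂ t * Θ t)) i j) t) :
    ∀ (k : ℕ) (s t : ℝ), (χ s * Θ s ^ k).trace = (χ t * Θ t ^ k).trace := by
  intro k
  have hderiv (t : ℝ) : HasDerivAt (fun s => (χ s * Θ s ^ k).trace) 0 t := by
    have hlie (X : Matrix (Fin N) (Fin N) ℂ) :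
        ⁅X, M₁ t - α • χ t⁆ = ⁅X, M₁ t⁆ - α • ⁅X, χ t⁆ := by
      simp only [Ring.lie_def, mul_sub, sub_mul, mul_smul_comm, smul_mul_assoc, smul_sub]
      abel
    refine hasDerivAt_trace_mul_pow_eq_zero (M := M₁ t - α • χ t) (P := M₂ t) ?_ ?_ k
    · rw [hlie]; exact hΘ t
    · rw [hlie, Ring.lie_def (χ t) (χ t), sub_self, smul_zero, sub_zero]; exact hχ t
  exact is_const_of_deriv_eq_zero (fun t => (hderiv t).differentiableAt) fun t => (hderiv t).deriv

/-- along any solution of the quantized Hazeltine system, the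
cross-helicity `tr(χΘᵏ)` is constant in time for every natural number `k`. -/
theorem stmt18 (N : ℕ) (W Θ χ M₁ M₂ : ℝ → Matrix (Fin N) (Fin N) ℂ) (α : ℝ)
    (hW : ∀ t i j, HasDerivAt (fun s => W s i j)
      (((W t * M₁ t - M₁ t * W t) + (Θ t * M₂ t - M₂ t * Θ t)) i j) t)
    (hΘ : ∀ t i j, HasDerivAt (fun s => Θ s i j)
      (((Θ t * M₁ t - M₁ t * Θ t) - α • (Θ t * χ t - χ t * Θ t)) i j) t)
    (hχ : ∀ t i j, HasDerivAt (fun s => χ s i j)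
      (((χ t * M₁ t - M₁ t * χ t) + (Θ t * M₂ t - M₂ t * Θ t)) i j) t) :
    ∀ (k : ℕ) (s t : ℝ), (χ s * Θ s ^ k).trace = (χ t * Θ t ^ k).trace :=
  stmt18_general N Θ χ M₁ M₂ α hΘ hχ
end
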